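/- If the graph has no backward dangerous structure and (i, j) ∈ E (T_j ← T_i in the rw-subgraph), then ¬(min_out(j) < min_out(i)). -/
import Mathlib


/-- `min_out(v)`: the minimum `u` with `(v,u) ∈ E` and `u < v`, or `v + 1`
if no such `u` exists. -/
def minOut (E : Finset (ℕ × ℕ)) (v : ℕ) : ℕ :=
  (insert (v + 1) ((E.filter (fun p => p.1 = v ∧ p.2 < v)).image Prod.snd)).min'
    (Finset.insert_nonempty _ _)

lemma minOut_le_succ (E : Finset (ℕ × ℕ)) (v : ℕ) : minOut E v ≤ v + 1 :=
  Finset.min'_le _ _ (Finset.mem_insert_self _ _)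

lemma minOut_le (E : Finset (ℕ × ℕ)) {v u : ℕ} (he : (v, u) ∈ E) (hu : u < v) :
    minOut E v ≤ u := by
  apply Finset.min'_le
  apply Finset.mem_insert_of_mem
  exact Finset.mem_image.mpr ⟨(v, u), Finset.mem_filter.mpr ⟨he, rfl, hu⟩, rfl⟩

lemma minOut_cases (E : Finset (ℕ × ℕ)) (v : ℕ) :
    minOut E v = v + 1 ∨ ∃ u, (v, u) ∈ E ∧ u < v ∧ minOut E v = u := by
  have hmem := Finset.min'_mem (insert (v + 1)
    ((E.filter (fun p => p.1 = v ∧ p.2 < v)).image Prod.snd)) (Finset.insert_nonempty _ _)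
  rcases Finset.mem_insert.mp hmem with h | h
  · exact Or.inl h
  · rcases Finset.mem_image.mp h with ⟨p, hp, hsnd⟩
    rcases Finset.mem_filter.mp hp with ⟨hpE, h1, h2⟩
    refine Or.inr ⟨p.2, ?_, hsnd ▸ h2, hsnd.symm⟩
    rwa [show (v, p.2) = p by rw [← h1]]

/-- Under the absence of backward dangerous structures (no edges `(b,a)` and
`(c,b)` with `a < b` and `a ≤ c`): for any edge `(i, j) ∈ E` (meaning
`T_j ← T_i`), we have `¬ (min_out(j) < min_out(i))`. -/
theorem minOut_no_reverse (E : Finset (ℕ × ℕ))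
    (h : ¬ ∃ a b c : ℕ, (b, a) ∈ E ∧ (c, b) ∈ E ∧ a < b ∧ a ≤ c) :
    ∀ i j : ℕ, (i, j) ∈ E → ¬ (minOut E j < minOut E i) := by
  intro i j hij hlt
  have hi := minOut_le_succ E i
  rcases minOut_cases E j with hj | ⟨u, huE, hu, hju⟩
  · have hji : j < i := by omega
    have := minOut_le E hij hji
    omega
  · exact h ⟨u, j, i, huE, hij, hu, by omega⟩
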